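/- arXiv:1909.12818 — 3 statements merged into one kernel-verified Lean document; each statement's English description precedes it below -/
import Mathlib

section
/- Let 0 < p < ∞, 0 < q ≤ ∞, and b < -1/q (b ≤ 0 if q = ∞). Then the limiting interpolation space (L_p(Ω), L_∞(Ω))_{(1,b),q} coincides with the Lorentz–Zygmund space L_{∞,q}(log L)_b(Ω), with equivalent quasi-norms: (∫₀^1 (t^{-1/p}(1-log t)^b (∫₀^t f^*(u)^p du)^{1/p})^q dt/t)^{1/q} ≍ (∫₀^1 ((1-log t)^b f^*(t))^q dt/t)^{1/q}. -/
/-!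
The lower bound is pointwise: for decreasing `g`, `g t ^ p ≤ t⁻¹ ∫₀ᵗ g ^ p`.

For the upper bound put `r = q / p` and split `(0, t]` into the dyadic pieces
`(2⁻ᵏ⁻¹ t, 2⁻ᵏ t]`, so that `t⁻¹ ∫₀ᵗ g ^ p ≤ ∑ₖ 2⁻ᵏ⁻¹ g (2⁻ᵏ⁻¹ t) ^ p`. A power-mean inequality
(subadditivity of `x ↦ x ^ r` if `r ≤ 1`, Hölder if `r > 1`) takes the `r`-th power inside the
series at the price of the weights `2^(-(k+1) min r 1)`. The substitution `s = 2⁻ᵏ⁻¹ t` changes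
the weight `(1 - log t) ^ (b q) / t` by a factor at most `(1 + (k+1) log 2) ^ |b q|`, and this
logarithmic growth is absorbed by the geometric weights.

Both sides are handled as integrals in `ℝ≥0∞`. If `∫₀ᵗ g ^ p` diverges for one `t`, it diverges
for all `t < 1`; then both Bochner integrals of the statement take the junk value `0`.
-/

open MeasureTheory Set
open scoped ENNReal

namespace LorentzZygmund

theorem rpow_tsum_le_tsum_rpow {r : ℝ} (hr0 : 0 < r) (hr1 : r ≤ 1) (y : ℕ → ℝ≥0∞) :
    (∑' k, y k) ^ r ≤ ∑' k, y k ^ r := by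
  have hfin (s : Finset ℕ) : (∑ k ∈ s, y k) ^ r ≤ ∑ k ∈ s, y k ^ r := by
    induction s using Finset.induction_on with
    | empty => simp [ENNReal.zero_rpow_of_pos hr0]
    | insert i s hi ih =>
      rw [Finset.sum_insert hi, Finset.sum_insert hi]
      exact (ENNReal.rpow_add_le_add_rpow _ _ hr0.le hr1).trans (add_le_add le_rfl ih)
  rw [← ENNReal.le_rpow_inv_iff hr0, ENNReal.tsum_eq_iSup_sum]
  refine iSup_le fun s => ?_
  rw [ENNReal.le_rpow_inv_iff hr0]
  exact (hfin s).trans (ENNReal.sum_le_tsum s)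

theorem rpow_tsum_mul_le_of_one_lt {r : ℝ} (hr : 1 < r) {a : ℕ → ℝ≥0∞} (ha : ∑' k, a k ≤ 1)
    (x : ℕ → ℝ≥0∞) : (∑' k, a k * x k) ^ r ≤ ∑' k, a k * x k ^ r := by
  have hr' : (r.conjExponent).HolderConjugate r := (Real.HolderConjugate.conjExponent hr).symm
  have hsplit (k : ℕ) : a k * x k = a k ^ r.conjExponent⁻¹ * (a k ^ r⁻¹ * x k) := by
    rw [← mul_assoc, ← ENNReal.rpow_add_of_nonneg _ _ (inv_nonneg.2 hr'.nonneg)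
      (inv_nonneg.2 (by linarith)), hr'.inv_add_inv_eq_one, ENNReal.rpow_one]
  have hold := ENNReal.lintegral_mul_le_Lp_mul_Lq Measure.count hr'
    (f := fun k => a k ^ r.conjExponent⁻¹) (g := fun k => a k ^ r⁻¹ * x k)
    Measurable.of_discrete.aemeasurable Measurable.of_discrete.aemeasurable
  simp only [Pi.mul_apply, lintegral_count, ← hsplit,
    ENNReal.mul_rpow_of_nonneg _ _ (by linarith : (0:ℝ) ≤ r), ← ENNReal.rpow_mul,
    inv_mul_cancel₀ hr'.ne_zero, inv_mul_cancel₀ (by linarith : r ≠ 0), ENNReal.rpow_one] at hold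
  rw [← ENNReal.le_rpow_inv_iff (by linarith)]
  calc ∑' k, a k * x k ≤ _ := hold
    _ ≤ 1 * (∑' k, a k * x k ^ r) ^ (1 / r) := by
      gcongr
      exact ENNReal.rpow_le_one ha (one_div_pos.2 hr'.pos).le
    _ = _ := by rw [one_mul, one_div]

theorem rpow_tsum_mul_le {r : ℝ} (hr : 0 < r) {a : ℕ → ℝ≥0∞} (ha : ∑' k, a k ≤ 1)
    (x : ℕ → ℝ≥0∞) : (∑' k, a k * x k) ^ r ≤ ∑' k, a k ^ min r 1 * x k ^ r := by
  rcases le_or_gt r 1 with hr1 | hr1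
  · rw [min_eq_left hr1]
    simpa only [ENNReal.mul_rpow_of_nonneg _ _ hr.le] using
      rpow_tsum_le_tsum_rpow hr hr1 fun k => a k * x k
  · simpa only [min_eq_right hr1.le, ENNReal.rpow_one] using rpow_tsum_mul_le_of_one_lt hr1 ha x

noncomputable def hardyAverage (h : ℝ → ℝ≥0∞) (t : ℝ) : ℝ≥0∞ :=
  (∫⁻ u in Ioc 0 t, h u) / ENNReal.ofReal t

theorem le_hardyAverage {h : ℝ → ℝ≥0∞} {t : ℝ} (ht : 0 < t) (hh : AntitoneOn h (Ioc 0 t)) :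
    h t ≤ hardyAverage h t := by
  rw [hardyAverage,
    ENNReal.le_div_iff_mul_le (.inl (by simpa using ht)) (.inl ENNReal.ofReal_ne_top)]
  calc h t * ENNReal.ofReal t = ∫⁻ _ in Ioc 0 t, h t := by
        rw [setLIntegral_const, Real.volume_Ioc, sub_zero]
    _ ≤ ∫⁻ u in Ioc 0 t, h u :=
        setLIntegral_mono' measurableSet_Ioc fun u hu => hh hu (right_mem_Ioc.2 ht) hu.2

theorem measurable_hardyAverage (h : ℝ → ℝ≥0∞) : Measurable (hardyAverage h) :=
  (Monotone.measurable fun _ _ hst => lintegral_mono_set (Ioc_subset_Ioc_right hst)).div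
    ENNReal.measurable_ofReal

theorem Ioc_zero_subset_iUnion_Ioc_two_inv_pow {t : ℝ} (ht : 0 < t) :
    Ioc 0 t ⊆ ⋃ k : ℕ, Ioc ((2:ℝ)⁻¹ ^ (k + 1) * t) ((2:ℝ)⁻¹ ^ k * t) := by
  rintro u ⟨hu0, hut⟩
  obtain ⟨k, hk1, hk2⟩ := exists_nat_pow_near_of_lt_one (div_pos hu0 ht)
    ((div_le_one ht).2 hut) (by norm_num) (by norm_num : (2:ℝ)⁻¹ < 1)
  exact mem_iUnion.2 ⟨k, (lt_div_iff₀ ht).1 hk1, (div_le_iff₀ ht).1 hk2⟩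

theorem hardyAverage_le_tsum {h : ℝ → ℝ≥0∞} {t : ℝ} (ht : 0 < t) (hh : AntitoneOn h (Ioc 0 t)) :
    hardyAverage h t ≤
      ∑' k : ℕ, ENNReal.ofReal ((2:ℝ)⁻¹ ^ (k + 1)) * h ((2:ℝ)⁻¹ ^ (k + 1) * t) := by
  have hpiece (k : ℕ) : ∫⁻ u in Ioc ((2:ℝ)⁻¹ ^ (k + 1) * t) ((2:ℝ)⁻¹ ^ k * t), h u
      ≤ ENNReal.ofReal ((2:ℝ)⁻¹ ^ (k + 1)) * h ((2:ℝ)⁻¹ ^ (k + 1) * t) * ENNReal.ofReal t := by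
    have hsub : Ioc ((2:ℝ)⁻¹ ^ (k + 1) * t) ((2:ℝ)⁻¹ ^ k * t) ⊆ Ioc 0 t := by
      refine Ioc_subset_Ioc (by positivity) (mul_le_of_le_one_left ht.le ?_)
      exact pow_le_one₀ (by norm_num) (by norm_num)
    calc ∫⁻ u in Ioc ((2:ℝ)⁻¹ ^ (k + 1) * t) ((2:ℝ)⁻¹ ^ k * t), h u
        ≤ ∫⁻ _ in Ioc ((2:ℝ)⁻¹ ^ (k + 1) * t) ((2:ℝ)⁻¹ ^ k * t),
            h ((2:ℝ)⁻¹ ^ (k + 1) * t) :=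
          setLIntegral_mono' measurableSet_Ioc fun u hu =>
            hh ⟨by positivity, (hsub hu).2.trans' hu.1.le⟩ (hsub hu) hu.1.le
      _ = _ := by
          rw [setLIntegral_const, Real.volume_Ioc, pow_succ,
            show (2:ℝ)⁻¹ ^ k * t - (2:ℝ)⁻¹ ^ k * 2⁻¹ * t = (2:ℝ)⁻¹ ^ k * 2⁻¹ * t by ring,
            ENNReal.ofReal_mul (by positivity)]
          ring
  rw [hardyAverage, ENNReal.div_le_iff (by simpa using ht) (by simp), ← ENNReal.tsum_mul_right]
  exact (lintegral_mono_set (Ioc_zero_subset_iUnion_Ioc_two_inv_pow ht)).trans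
    ((lintegral_iUnion_le _ _).trans (ENNReal.tsum_le_tsum hpiece))

theorem tsum_ofReal_two_inv_pow_succ : ∑' k : ℕ, ENNReal.ofReal ((2:ℝ)⁻¹ ^ (k + 1)) = 1 := by
  simp_rw [ENNReal.ofReal_pow (by norm_num : (0:ℝ) ≤ 2⁻¹), ENNReal.ofReal_inv_of_pos two_pos,
    ENNReal.ofReal_ofNat, ENNReal.tsum_geometric_add_one, ENNReal.one_sub_inv_two, inv_inv]
  exact ENNReal.inv_mul_cancel two_ne_zero ENNReal.ofNat_ne_top

noncomputable def logWeight (β t : ℝ) : ℝ≥0∞ := ENNReal.ofReal ((1 - Real.log t) ^ β / t)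

theorem measurable_logWeight (β : ℝ) : Measurable (logWeight β) := by
  unfold logWeight; fun_prop

theorem rpow_le_one_add_rpow_abs_mul_add_rpow {A L : ℝ} (hA : 1 ≤ A) (hL : 0 ≤ L) (β : ℝ) :
    A ^ β ≤ (1 + L) ^ |β| * (A + L) ^ β := by
  rcases le_or_gt 0 β with hβ | hβ
  · rw [abs_of_nonneg hβ]
    calc A ^ β ≤ (A + L) ^ β := by gcongr; linarith
      _ ≤ (1 + L) ^ β * (A + L) ^ β :=
          le_mul_of_one_le_left (by positivity) (Real.one_le_rpow (by linarith) hβ)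
  · have hAL : (A + L) / (1 + L) ≤ A := by
      rw [div_le_iff₀ (by linarith)]; nlinarith
    calc A ^ β ≤ ((A + L) / (1 + L)) ^ β :=
          Real.rpow_le_rpow_of_nonpos (by positivity) hAL hβ.le
      _ = (1 + L) ^ |β| * (A + L) ^ β := by
          rw [abs_of_neg hβ, Real.div_rpow (by linarith) (by linarith), Real.rpow_neg (by linarith),
            div_eq_mul_inv, mul_comm]

theorem ofReal_inv_mul_logWeight_div_le (β : ℝ) {s c : ℝ} (hs : 0 < s) (hsc : s ≤ c) (hc : c ≤ 1) :
    ENNReal.ofReal c⁻¹ * logWeight β (s / c) ≤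
      ENNReal.ofReal ((1 - Real.log c) ^ |β|) * logWeight β s := by
  have hc0 : 0 < c := hs.trans_le hsc
  have hlogc : Real.log c ≤ 0 := Real.log_nonpos hc0.le hc
  have hlogsc : Real.log (s / c) ≤ 0 := Real.log_nonpos (by positivity) ((div_le_one hc0).2 hsc)
  have key := rpow_le_one_add_rpow_abs_mul_add_rpow (A := 1 - Real.log (s / c))
    (L := -Real.log c) (by linarith) (by linarith) β
  rw [Real.log_div hs.ne' hc0.ne', show 1 - (Real.log s - Real.log c) + -Real.log c
    = 1 - Real.log s by ring, ← sub_eq_add_neg] at key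
  rw [logWeight, logWeight, ← ENNReal.ofReal_mul (by positivity),
    ← ENNReal.ofReal_mul (Real.rpow_nonneg (by linarith) _), Real.log_div hs.ne' hc0.ne']
  refine ENNReal.ofReal_le_ofReal ?_
  calc c⁻¹ * ((1 - (Real.log s - Real.log c)) ^ β / (s / c))
      = (1 - (Real.log s - Real.log c)) ^ β / s := by field_simp
    _ ≤ (1 - Real.log c) ^ |β| * (1 - Real.log s) ^ β / s := by gcongr
    _ = _ := by ring

theorem setLIntegral_Ioo_comp_mul_left {c : ℝ} (hc : 0 < c) (a b : ℝ) (ψ : ℝ → ℝ≥0∞) :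
    ∫⁻ t in Ioo a b, ψ (c * t) = ENNReal.ofReal c⁻¹ * ∫⁻ s in Ioo (c * a) (c * b), ψ s := by
  have he := measurableEmbedding_mulLeft₀ hc.ne'
  have hpre : (c * ·) ⁻¹' Ioo (c * a) (c * b) = Ioo a b := by
    ext t; simp [mul_lt_mul_iff_right₀ hc]
  rw [← he.lintegral_map, ← hpre, ← he.restrict_map, Real.map_volume_mul_left hc.ne',
    abs_of_pos (inv_pos.2 hc), Measure.restrict_smul, lintegral_smul_measure, smul_eq_mul]

theorem lintegral_logWeight_mul_comp_mul_le (β : ℝ) {c : ℝ} (hc0 : 0 < c) (hc1 : c ≤ 1)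
    (φ : ℝ → ℝ≥0∞) :
    ∫⁻ t in Ioo 0 1, logWeight β t * φ (c * t) ≤
      ENNReal.ofReal ((1 - Real.log c) ^ |β|) * ∫⁻ t in Ioo 0 1, logWeight β t * φ t := by
  have hsubst := setLIntegral_Ioo_comp_mul_left hc0 0 1 fun s => logWeight β (s / c) * φ s
  simp only [mul_div_cancel_left₀ _ hc0.ne', mul_zero, mul_one] at hsubst
  rw [hsubst, ← lintegral_const_mul' _ _ ENNReal.ofReal_ne_top,
    ← lintegral_const_mul' _ _ ENNReal.ofReal_ne_top]
  calc ∫⁻ s in Ioo 0 c, ENNReal.ofReal c⁻¹ * (logWeight β (s / c) * φ s)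
      ≤ ∫⁻ s in Ioo 0 c, ENNReal.ofReal ((1 - Real.log c) ^ |β|) * (logWeight β s * φ s) := by
        refine setLIntegral_mono' measurableSet_Ioo fun s hs => ?_
        rw [← mul_assoc, ← mul_assoc]
        exact mul_le_mul' (ofReal_inv_mul_logWeight_div_le β hs.1 hs.2.le hc1) le_rfl
    _ ≤ _ := lintegral_mono_set (Ioo_subset_Ioo_right hc1)

theorem exists_one_sub_log_rpow_le_mul_rpow_neg {m δ : ℝ} (hm : 0 ≤ m) (hδ : 0 < δ) :
    ∃ C, ∀ c ∈ Ioc (0:ℝ) 1, (1 - Real.log c) ^ m ≤ C * c ^ (-δ) := by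
  set ε := δ / (m + 1)
  have hε : 0 < ε := by positivity
  refine ⟨(1 + 1 / ε) ^ m, fun c ⟨hc0, hc1⟩ => ?_⟩
  have hpow : 1 ≤ c ^ (-ε) := Real.one_le_rpow_of_pos_of_le_one_of_nonpos hc0 hc1 (by linarith)
  have hlog : -Real.log c ≤ c ^ (-ε) / ε := by
    rw [← Real.log_inv, Real.rpow_neg hc0.le, ← Real.inv_rpow hc0.le]
    exact Real.log_le_rpow_div (by positivity) hε
  have hbase : 1 - Real.log c ≤ (1 + 1 / ε) * c ^ (-ε) := by
    rw [add_mul, one_mul, one_div_mul_eq_div]; linarith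
  have hεm : -δ ≤ -ε * m := by
    rw [neg_mul, neg_le_neg_iff, div_mul_eq_mul_div, div_le_iff₀ (by linarith)]; nlinarith
  calc (1 - Real.log c) ^ m ≤ ((1 + 1 / ε) * c ^ (-ε)) ^ m :=
        Real.rpow_le_rpow (by linarith [Real.log_nonpos hc0.le hc1]) hbase hm
    _ = (1 + 1 / ε) ^ m * c ^ (-ε * m) := by
        rw [Real.mul_rpow (by positivity) (by positivity), ← Real.rpow_mul hc0.le]
    _ ≤ (1 + 1 / ε) ^ m * c ^ (-δ) :=
        mul_le_mul_of_nonneg_left (Real.rpow_le_rpow_of_exponent_ge hc0 hc1 hεm) (by positivity)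

theorem tsum_ofReal_two_inv_pow_rpow_mul_ne_top {s m : ℝ} (hs : 0 < s) (hm : 0 ≤ m) :
    ∑' k : ℕ, ENNReal.ofReal ((2:ℝ)⁻¹ ^ (k + 1)) ^ s *
      ENNReal.ofReal ((1 - Real.log ((2:ℝ)⁻¹ ^ (k + 1))) ^ m) ≠ ⊤ := by
  obtain ⟨C, hC⟩ := exists_one_sub_log_rpow_le_mul_rpow_neg hm (half_pos hs)
  set ρ := ENNReal.ofReal ((2:ℝ)⁻¹ ^ (s / 2))
  have hρ : ρ < 1 :=
    ENNReal.ofReal_lt_one.2 (Real.rpow_lt_one (by norm_num) (by norm_num) (by positivity))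
  have hterm (k : ℕ) : ENNReal.ofReal ((2:ℝ)⁻¹ ^ (k + 1)) ^ s *
      ENNReal.ofReal ((1 - Real.log ((2:ℝ)⁻¹ ^ (k + 1))) ^ m) ≤ ENNReal.ofReal C * ρ ^ (k + 1) := by
    set d : ℝ := (2:ℝ)⁻¹ ^ (k + 1)
    have hd : d ∈ Ioc (0:ℝ) 1 := ⟨by positivity, pow_le_one₀ (by norm_num) (by norm_num)⟩
    have hds : d ^ s * d ^ (-(s / 2)) = ((2:ℝ)⁻¹ ^ (s / 2)) ^ (k + 1) := by
      rw [← Real.rpow_add hd.1]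
      simp only [d, ← Real.rpow_natCast, ← Real.rpow_mul (by norm_num : (0:ℝ) ≤ 2⁻¹)]
      ring_nf
    rw [ENNReal.ofReal_rpow_of_nonneg hd.1.le hs.le, ← ENNReal.ofReal_mul (by positivity),
      ← ENNReal.ofReal_pow (by positivity), ← ENNReal.ofReal_mul' (by positivity), ← hds]
    refine ENNReal.ofReal_le_ofReal ?_
    calc d ^ s * (1 - Real.log d) ^ m ≤ d ^ s * (C * d ^ (-(s / 2))) := by gcongr; exact hC d hd
      _ = C * (d ^ s * d ^ (-(s / 2))) := by ring
  refine ne_top_of_le_ne_top ?_ (ENNReal.tsum_le_tsum hterm)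
  rw [ENNReal.tsum_mul_left, ENNReal.tsum_geometric_add_one]
  exact ENNReal.mul_ne_top ENNReal.ofReal_ne_top
    (ENNReal.mul_ne_top (hρ.trans ENNReal.one_lt_top).ne
      (ENNReal.inv_ne_top.2 (tsub_pos_of_lt hρ).ne'))

theorem hardyAverage_rpow_le_tsum {h : ℝ → ℝ≥0∞} {r t : ℝ} (hr : 0 < r) (ht : 0 < t)
    (hh : AntitoneOn h (Ioc 0 t)) :
    hardyAverage h t ^ r ≤ ∑' k : ℕ, ENNReal.ofReal ((2:ℝ)⁻¹ ^ (k + 1)) ^ min r 1 *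
      h ((2:ℝ)⁻¹ ^ (k + 1) * t) ^ r :=
  (ENNReal.rpow_le_rpow (hardyAverage_le_tsum ht hh) hr.le).trans
    (rpow_tsum_mul_le hr tsum_ofReal_two_inv_pow_succ.le _)

theorem lintegral_logWeight_mul_hardyAverage_rpow_le (β : ℝ) {r : ℝ} (hr : 0 < r) :
    ∃ K : ℝ≥0∞, K ≠ ⊤ ∧ ∀ h : ℝ → ℝ≥0∞, AntitoneOn h (Ioo 0 1) →
      ∫⁻ t in Ioo 0 1, logWeight β t * hardyAverage h t ^ r ≤
        K * ∫⁻ t in Ioo 0 1, logWeight β t * h t ^ r := by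
  set d : ℕ → ℝ := fun k => (2:ℝ)⁻¹ ^ (k + 1)
  have hd (k : ℕ) : d k ∈ Ioc (0:ℝ) 1 := ⟨by positivity, pow_le_one₀ (by norm_num) (by norm_num)⟩
  refine ⟨∑' k, ENNReal.ofReal (d k) ^ min r 1 * ENNReal.ofReal ((1 - Real.log (d k)) ^ |β|),
    tsum_ofReal_two_inv_pow_rpow_mul_ne_top (lt_min hr one_pos) (abs_nonneg β), fun h hh => ?_⟩
  have hmeas (k : ℕ) : AEMeasurable (fun t => logWeight β t * h (d k * t) ^ r)
      (volume.restrict (Ioo 0 1)) := by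
    have hanti : AntitoneOn (fun t => h (d k * t)) (Ioo 0 1) :=
      hh.comp_MonotoneOn ((monotone_mul_left_of_nonneg (hd k).1.le).monotoneOn _) fun x hx =>
        ⟨mul_pos (hd k).1 hx.1, (mul_le_of_le_one_left hx.1.le (hd k).2).trans_lt hx.2⟩
    exact (measurable_logWeight β).aemeasurable.mul
      ((aemeasurable_restrict_of_antitoneOn measurableSet_Ioo hanti).pow_const r)
  calc ∫⁻ t in Ioo 0 1, logWeight β t * hardyAverage h t ^ r
      ≤ ∫⁻ t in Ioo 0 1, ∑' k, ENNReal.ofReal (d k) ^ min r 1 * (logWeight β t * h (d k * t) ^ r) :=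
        setLIntegral_mono' measurableSet_Ioo fun t ht => by
          simp_rw [mul_left_comm _ (logWeight β t), ENNReal.tsum_mul_left]
          gcongr
          exact hardyAverage_rpow_le_tsum hr ht.1 (hh.mono (Ioc_subset_Ioo_right ht.2))
    _ = ∑' k, ENNReal.ofReal (d k) ^ min r 1 *
          ∫⁻ t in Ioo 0 1, logWeight β t * h (d k * t) ^ r := by
        rw [lintegral_tsum fun k => (hmeas k).const_mul _]
        congr with k
        exact lintegral_const_mul' _ _
          (ENNReal.rpow_ne_top_of_nonneg (le_min hr.le zero_le_one) ENNReal.ofReal_ne_top)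
    _ ≤ ∑' k, ENNReal.ofReal (d k) ^ min r 1 * (ENNReal.ofReal ((1 - Real.log (d k)) ^ |β|) *
          ∫⁻ t in Ioo 0 1, logWeight β t * h t ^ r) := by
        gcongr with k
        exact lintegral_logWeight_mul_comp_mul_le β (hd k).1 (hd k).2 fun u => h u ^ r
    _ = _ := by
        rw [← ENNReal.tsum_mul_right]
        congr with k
        ring

theorem lintegral_logWeight_mul_rpow_le_hardyAverage (β : ℝ) {r : ℝ} (hr : 0 ≤ r)
    {h : ℝ → ℝ≥0∞} (hh : AntitoneOn h (Ioo 0 1)) :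
    ∫⁻ t in Ioo 0 1, logWeight β t * h t ^ r ≤
      ∫⁻ t in Ioo 0 1, logWeight β t * hardyAverage h t ^ r := by
  refine setLIntegral_mono' measurableSet_Ioo fun t ht => ?_
  gcongr
  exact le_hardyAverage ht.1 (hh.mono (Ioc_subset_Ioo_right ht.2))

theorem lintegral_Ioc_eq_top_of_eq_top {h : ℝ → ℝ≥0∞} (hh : AntitoneOn h (Ioo 0 1))
    (hfin : ∀ t ∈ Ioo (0:ℝ) 1, h t ≠ ⊤) {t₀ : ℝ} (ht₀ : t₀ < 1)
    (hF₀ : ∫⁻ u in Ioc 0 t₀, h u = ⊤) : ∀ t ∈ Ioo (0:ℝ) 1, ∫⁻ u in Ioc 0 t, h u = ⊤ := by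
  intro t ht
  have hsplit : ∫⁻ u in Ioc 0 t₀, h u ≤ (∫⁻ u in Ioc 0 t, h u) + h t * ENNReal.ofReal (t₀ - t) :=
    calc ∫⁻ u in Ioc 0 t₀, h u ≤ ∫⁻ u in Ioc 0 t ∪ Ioc t t₀, h u :=
          lintegral_mono_set Ioc_subset_Ioc_union_Ioc
      _ ≤ (∫⁻ u in Ioc 0 t, h u) + ∫⁻ u in Ioc t t₀, h u := lintegral_union_le _ _ _
      _ ≤ (∫⁻ u in Ioc 0 t, h u) + ∫⁻ _ in Ioc t t₀, h t := by
          refine add_le_add le_rfl (setLIntegral_mono' measurableSet_Ioc fun u hu => ?_)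
          exact hh ht ⟨ht.1.trans hu.1, hu.2.trans_lt ht₀⟩ hu.1.le
      _ = _ := by rw [setLIntegral_const, Real.volume_Ioc]
  by_contra hne
  exact ENNReal.add_ne_top.2 ⟨hne, ENNReal.mul_ne_top (hfin t ht) ENNReal.ofReal_ne_top⟩
    (top_le_iff.1 (hF₀ ▸ hsplit))

theorem lintegral_logWeight_mul_hardyAverage_rpow_eq_top (β : ℝ) {r : ℝ} (hr : 0 < r)
    {h : ℝ → ℝ≥0∞} (hF : ∀ t ∈ Ioo (0:ℝ) 1, ∫⁻ u in Ioc 0 t, h u = ⊤) :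
    ∫⁻ t in Ioo 0 1, logWeight β t * hardyAverage h t ^ r = ⊤ := by
  have hpt : ∀ t ∈ Ioo (0:ℝ) 1, logWeight β t * hardyAverage h t ^ r = ⊤ := by
    intro t ⟨ht0, ht1⟩
    have hlog : 0 < 1 - Real.log t := by linarith [Real.log_neg ht0 ht1]
    rw [hardyAverage, hF t ⟨ht0, ht1⟩, ENNReal.top_div_of_ne_top ENNReal.ofReal_ne_top,
      ENNReal.top_rpow_of_pos hr, ENNReal.mul_top]
    exact (ENNReal.ofReal_pos.2 (by positivity)).ne'
  rw [setLIntegral_congr_fun measurableSet_Ioo hpt, setLIntegral_const, Real.volume_Ioo]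
  simp

theorem integral_Ioc_rpow_eq_toReal_lintegral {g : ℝ → ℝ}
    (hg : AEMeasurable g (volume.restrict (Ioo 0 1)))
    (hg0 : ∀ t ∈ Ioo (0:ℝ) 1, 0 ≤ g t) (p : ℝ) {t : ℝ} (ht : t < 1) :
    ∫ u in Ioc 0 t, g u ^ p = (∫⁻ u in Ioc 0 t, ENNReal.ofReal (g u ^ p)).toReal := by
  have hsub : Ioc 0 t ⊆ Ioo 0 1 := Ioc_subset_Ioo_right ht
  refine integral_eq_lintegral_of_nonneg_ae ?_ ?_
  · exact (ae_restrict_iff' measurableSet_Ioc).2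
      (ae_of_all _ fun u hu => Real.rpow_nonneg (hg0 u (hsub hu)) p)
  · exact ((hg.mono_set hsub).pow_const p).aestronglyMeasurable

theorem setIntegral_eq_toReal_lintegral_logWeight {g : ℝ → ℝ}
    (hg : AEMeasurable g (volume.restrict (Ioo 0 1))) (hg0 : ∀ t ∈ Ioo (0:ℝ) 1, 0 ≤ g t)
    {p q : ℝ} (hp : 0 < p) (hq : 0 ≤ q) (b : ℝ) :
    ∫ t in Ioo 0 1, ((1 - Real.log t) ^ b * g t) ^ q / t =
      (∫⁻ t in Ioo 0 1, logWeight (b * q) t * ENNReal.ofReal (g t ^ p) ^ (q / p)).toReal := by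
  rw [← integral_toReal]
  · refine setIntegral_congr_fun measurableSet_Ioo fun t ⟨ht0, ht1⟩ => ?_
    have hlog : 0 < 1 - Real.log t := by linarith [Real.log_neg ht0 ht1]
    have hgt := hg0 t ⟨ht0, ht1⟩
    rw [logWeight, ENNReal.toReal_mul, ← ENNReal.toReal_rpow, ENNReal.toReal_ofReal (by positivity),
      ENNReal.toReal_ofReal (by positivity), ← Real.rpow_mul hgt, mul_div_cancel₀ _ hp.ne',
      Real.mul_rpow (by positivity) hgt, ← Real.rpow_mul hlog.le]
    ring
  · exact ((measurable_logWeight _).aemeasurable.mul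
      ((hg.pow_const p).ennreal_ofReal.pow_const _))
  · exact ae_of_all _ fun t => ENNReal.mul_lt_top ENNReal.ofReal_lt_top
      (ENNReal.rpow_lt_top_of_nonneg (by positivity) ENNReal.ofReal_ne_top)

theorem setIntegral_eq_toReal_lintegral_logWeight_mul_hardyAverage {g : ℝ → ℝ}
    (hg : AEMeasurable g (volume.restrict (Ioo 0 1))) (hg0 : ∀ t ∈ Ioo (0:ℝ) 1, 0 ≤ g t)
    {p q : ℝ} (hp : 0 < p) (hq : 0 ≤ q) (b : ℝ)
    (hF : ∀ t ∈ Ioo (0:ℝ) 1, ∫⁻ u in Ioc 0 t, ENNReal.ofReal (g u ^ p) ≠ ⊤) :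
    ∫ t in Ioo 0 1, (t ^ (-(1/p)) * (1 - Real.log t) ^ b
        * (∫ u in Ioc 0 t, g u ^ p) ^ (1/p)) ^ q / t =
      (∫⁻ t in Ioo 0 1, logWeight (b * q) t *
        hardyAverage (fun u => ENNReal.ofReal (g u ^ p)) t ^ (q / p)).toReal := by
  rw [← integral_toReal]
  · refine setIntegral_congr_fun measurableSet_Ioo fun t ⟨ht0, ht1⟩ => ?_
    have hlog : 0 < 1 - Real.log t := by linarith [Real.log_neg ht0 ht1]
    rw [integral_Ioc_rpow_eq_toReal_lintegral hg hg0 p ht1]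
    set X := (∫⁻ u in Ioc 0 t, ENNReal.ofReal (g u ^ p))
    have hX : 0 ≤ X.toReal := ENNReal.toReal_nonneg
    rw [logWeight, hardyAverage, ENNReal.toReal_mul, ← ENNReal.toReal_rpow, ENNReal.toReal_div,
      ENNReal.toReal_ofReal (by positivity), ENNReal.toReal_ofReal ht0.le,
      Real.mul_rpow (by positivity) (by positivity), Real.mul_rpow (by positivity) (by positivity),
      ← Real.rpow_mul ht0.le, ← Real.rpow_mul hlog.le, ← Real.rpow_mul hX,
      Real.div_rpow hX ht0.le, show -(1 / p) * q = -(q / p) by ring, show 1 / p * q = q / p by ring,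
      Real.rpow_neg ht0.le]
    ring
  · exact (measurable_logWeight _).aemeasurable.mul
      ((measurable_hardyAverage _).pow_const _).aemeasurable
  · refine (ae_restrict_iff' measurableSet_Ioo).2 (ae_of_all _ fun t ht => ?_)
    exact ENNReal.mul_lt_top ENNReal.ofReal_lt_top (ENNReal.rpow_lt_top_of_nonneg (by positivity)
      (ENNReal.div_ne_top (hF t ht) (by simpa using ht.1)))

theorem setIntegral_eq_zero_of_lintegral_Ioc_eq_top {g : ℝ → ℝ}
    (hg : AEMeasurable g (volume.restrict (Ioo 0 1))) (hg0 : ∀ t ∈ Ioo (0:ℝ) 1, 0 ≤ g t)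
    {p q : ℝ} (hp : 0 < p) (hq : 0 < q) (b : ℝ)
    (hF : ∀ t ∈ Ioo (0:ℝ) 1, ∫⁻ u in Ioc 0 t, ENNReal.ofReal (g u ^ p) = ⊤) :
    ∫ t in Ioo 0 1, (t ^ (-(1/p)) * (1 - Real.log t) ^ b
        * (∫ u in Ioc 0 t, g u ^ p) ^ (1/p)) ^ q / t = 0 := by
  refine setIntegral_eq_zero_of_forall_eq_zero fun t ht => ?_
  rw [integral_Ioc_rpow_eq_toReal_lintegral hg hg0 p ht.2, hF t ht, ENNReal.toReal_top,
    Real.zero_rpow (one_div_ne_zero hp.ne'), mul_zero, Real.zero_rpow hq.ne', zero_div]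

theorem toReal_le_toReal_and_toReal_le_mul {x y K : ℝ≥0∞} (hK : K ≠ ⊤) (hxy : x ≤ y)
    (hyx : y ≤ K * x) : x.toReal ≤ y.toReal ∧ y.toReal ≤ K.toReal * x.toReal := by
  by_cases hx : x = ⊤
  · have hy : y = ⊤ := top_le_iff.1 (hx ▸ hxy)
    simp [hx, hy]
  · have hKx : K * x ≠ ⊤ := ENNReal.mul_ne_top hK hx
    exact ⟨ENNReal.toReal_mono (ne_top_of_le_ne_top hKx hyx) hxy,
      ENNReal.toReal_mul ▸ ENNReal.toReal_mono hKx hyx⟩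

end LorentzZygmund

open LorentzZygmund

theorem limiting_interpolation_LorentzZygmund_general (p q b : ℝ) (hp : 0 < p) (hq : 0 < q) :
    ∃ c C : ℝ, 0 < c ∧ 0 < C ∧ ∀ g : ℝ → ℝ,
      AntitoneOn g (Ioo (0:ℝ) 1) → (∀ t ∈ Ioo (0:ℝ) 1, 0 ≤ g t) →
      c * (∫ t in Ioo (0:ℝ) 1, ((1 - Real.log t) ^ b * g t) ^ q / t) ^ (1/q)
        ≤ (∫ t in Ioo (0:ℝ) 1,
            (t ^ (-(1/p)) * (1 - Real.log t) ^ b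
              * (∫ u in Ioc (0:ℝ) t, g u ^ p) ^ (1/p)) ^ q / t) ^ (1/q)
      ∧ (∫ t in Ioo (0:ℝ) 1,
            (t ^ (-(1/p)) * (1 - Real.log t) ^ b
              * (∫ u in Ioc (0:ℝ) t, g u ^ p) ^ (1/p)) ^ q / t) ^ (1/q)
        ≤ C * (∫ t in Ioo (0:ℝ) 1, ((1 - Real.log t) ^ b * g t) ^ q / t) ^ (1/q) := by
  obtain ⟨K, hK, hardy⟩ := lintegral_logWeight_mul_hardyAverage_rpow_le (b * q) (div_pos hq hp)
  refine ⟨1, (K.toReal + 1) ^ (1 / q), one_pos, by positivity, fun g hg hg0 => ?_⟩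
  set h : ℝ → ℝ≥0∞ := fun u => ENNReal.ofReal (g u ^ p)
  have hh : AntitoneOn h (Ioo 0 1) := fun x hx y hy hxy =>
    ENNReal.ofReal_le_ofReal (Real.rpow_le_rpow (hg0 y hy) (hg hx hy hxy) hp.le)
  have hSB := lintegral_logWeight_mul_rpow_le_hardyAverage (b * q) (div_pos hq hp).le hh
  have hBS := hardy h hh
  have hgm := aemeasurable_restrict_of_antitoneOn measurableSet_Ioo hg (μ := volume)
  rw [setIntegral_eq_toReal_lintegral_logWeight hgm hg0 hp hq.le b]
  by_cases hF : ∀ t ∈ Ioo (0:ℝ) 1, ∫⁻ u in Ioc 0 t, h u ≠ ⊤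
  · rw [setIntegral_eq_toReal_lintegral_logWeight_mul_hardyAverage hgm hg0 hp hq.le b hF]
    obtain ⟨hle, hge⟩ := toReal_le_toReal_and_toReal_le_mul hK hSB hBS
    refine ⟨by rw [one_mul]; gcongr, ?_⟩
    rw [← Real.mul_rpow (by positivity) ENNReal.toReal_nonneg]
    gcongr
    exact hge.trans (mul_le_mul_of_nonneg_right (by linarith) ENNReal.toReal_nonneg)
  · push Not at hF
    obtain ⟨t₀, ht₀, hF₀⟩ := hF
    have hFtop := lintegral_Ioc_eq_top_of_eq_top hh (fun _ _ => ENNReal.ofReal_ne_top) ht₀.2 hF₀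
    have hS : ∫⁻ t in Ioo 0 1, logWeight (b * q) t * h t ^ (q / p) = ⊤ := by
      by_contra hne
      exact ENNReal.mul_ne_top hK hne (top_le_iff.1
        (lintegral_logWeight_mul_hardyAverage_rpow_eq_top (b * q) (div_pos hq hp) hFtop ▸ hBS))
    rw [setIntegral_eq_zero_of_lintegral_Ioc_eq_top hgm hg0 hp hq b hFtop, hS]
    simp [Real.zero_rpow (inv_ne_zero hq.ne')]

/-- The limiting interpolation space `(L_p(Ω), L_∞(Ω))_{(1,b),q}` coincides with the
Lorentz–Zygmund space `L_{∞,q}(log L)_b(Ω)` (here `|Ω| = 1`): for `0 < p < ∞`,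
`0 < q < ∞` and `b < -1/q`, with equivalence constants independent of the function,
`(∫₀^1 (t^{-1/p}(1-log t)^b (∫₀^t f^*(u)^p du)^{1/p})^q dt/t)^{1/q}
  ≍ (∫₀^1 ((1-log t)^b f^*(t))^q dt/t)^{1/q}`,
expressed via the decreasing rearrangement `f^*`, i.e. via an arbitrary non-negative
decreasing function `g` on `(0,1)`. -/
theorem limiting_interpolation_LorentzZygmund (p q b : ℝ) (hp : 0 < p) (hq : 0 < q)
    (hb : b < -(1/q)) :
    ∃ c C : ℝ, 0 < c ∧ 0 < C ∧ ∀ g : ℝ → ℝ,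
      AntitoneOn g (Ioo (0:ℝ) 1) → (∀ t ∈ Ioo (0:ℝ) 1, 0 ≤ g t) →
      c * (∫ t in Ioo (0:ℝ) 1, ((1 - Real.log t) ^ b * g t) ^ q / t) ^ (1/q)
        ≤ (∫ t in Ioo (0:ℝ) 1,
            (t ^ (-(1/p)) * (1 - Real.log t) ^ b
              * (∫ u in Ioc (0:ℝ) t, g u ^ p) ^ (1/p)) ^ q / t) ^ (1/q)
      ∧ (∫ t in Ioo (0:ℝ) 1,
            (t ^ (-(1/p)) * (1 - Real.log t) ^ b
              * (∫ u in Ioc (0:ℝ) t, g u ^ p) ^ (1/p)) ^ q / t) ^ (1/q)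
        ≤ C * (∫ t in Ioo (0:ℝ) 1, ((1 - Real.log t) ^ b * g t) ^ q / t) ^ (1/q) :=
  limiting_interpolation_LorentzZygmund_general p q b hp hq
end

section
/- Let 0 < q < ∞ and let f^* : (0,1) → [0,∞) be decreasing with ∫₀^1 t^{q/2} f^*(t)^q dt/t < ∞. Then lim_{r → ∞} r^{-1/q} (∫₀^1 (t^{1/r} f^*(t))^q dt/t)^{1/q} = q^{-1/q} · lim_{t→0+} f^*(t). -/
/-!
Substituting `t = x ^ (r / q)` turns `∫₀¹ t ^ (q / r) g(t) ^ q dt / t` into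
`(r / q) ∫₀¹ g(x ^ (r / q)) ^ q dx`, so the normalized quantity equals
`(q⁻¹ ∫₀¹ g(x ^ (r / q)) ^ q dx) ^ (1 / q)`. As `r → ∞`, `x ^ (r / q) → 0⁺` for every
`x ∈ (0, 1)`, and `0 ≤ g ≤ L` by monotonicity, so dominated convergence gives the limit
`(L ^ q / q) ^ (1 / q)`.
-/

open MeasureTheory Set Filter Topology

theorem AntitoneOn.le_of_tendsto_nhdsGT {g : ℝ → ℝ} {a b L : ℝ} (hg : AntitoneOn g (Ioo a b))
    (hL : Tendsto g (𝓝[>] a) (𝓝 L)) {t : ℝ} (ht : t ∈ Ioo a b) : g t ≤ L := by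
  refine ge_of_tendsto hL ?_
  filter_upwards [Ioo_mem_nhdsGT ht.1] with s hs
  exact hg ⟨hs.1, hs.2.trans ht.2⟩ ht hs.2.le

theorem rpow_mem_Ioo_zero_one {x p : ℝ} (hx : x ∈ Ioo (0 : ℝ) 1) (hp : 0 < p) :
    x ^ p ∈ Ioo (0 : ℝ) 1 :=
  ⟨Real.rpow_pos_of_pos hx.1 p, Real.rpow_lt_one hx.1.le hx.2 hp⟩

theorem image_rpow_Ioo_zero_one {p : ℝ} (hp : 0 < p) :
    (· ^ p) '' Ioo (0 : ℝ) 1 = Ioo 0 1 := by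
  refine Subset.antisymm (image_subset_iff.2 fun x hx => rpow_mem_Ioo_zero_one hx hp) fun y hy => ?_
  refine ⟨y ^ p⁻¹, rpow_mem_Ioo_zero_one hy (inv_pos.2 hp), ?_⟩
  simp [← Real.rpow_mul hy.1.le, hp.ne']

theorem integral_comp_rpow_Ioo_zero_one (f : ℝ → ℝ) {p : ℝ} (hp : 0 < p) :
    ∫ x in Ioo (0 : ℝ) 1, p * x ^ (p - 1) * f (x ^ p) = ∫ y in Ioo (0 : ℝ) 1, f y := by
  conv_rhs => rw [← image_rpow_Ioo_zero_one hp]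
  rw [integral_image_eq_integral_abs_deriv_smul measurableSet_Ioo
    (fun x hx => (Real.hasDerivAt_rpow_const (Or.inl hx.1.ne')).hasDerivWithinAt)
    ((Real.rpow_left_injOn hp.ne').mono fun x hx => hx.1.le)]
  refine setIntegral_congr_fun measurableSet_Ioo fun x hx => ?_
  rw [smul_eq_mul, abs_of_pos (mul_pos hp (Real.rpow_pos_of_pos hx.1 _))]

theorem integral_rpow_mul_Ioo_zero_one (F : ℝ → ℝ) {p : ℝ} (hp : 0 < p) :
    ∫ y in Ioo (0 : ℝ) 1, y ^ (p⁻¹ - 1) * F y = p * ∫ x in Ioo (0 : ℝ) 1, F (x ^ p) := by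
  rw [← integral_comp_rpow_Ioo_zero_one _ hp, ← integral_const_mul]
  refine setIntegral_congr_fun measurableSet_Ioo fun x hx => ?_
  have hx0 : 0 < x := hx.1
  have hcancel : x ^ (p - 1) * (x ^ p) ^ (p⁻¹ - 1) = 1 := by
    rw [← Real.rpow_mul hx0.le, ← Real.rpow_add hx0, mul_sub, mul_inv_cancel₀ hp.ne']
    simp
  linear_combination p * F (x ^ p) * hcancel

theorem tendsto_integral_comp_rpow_Ioo_zero_one {h : ℝ → ℝ} {L : ℝ}
    (hh : AntitoneOn h (Ioo 0 1)) (hh0 : ∀ t ∈ Ioo (0 : ℝ) 1, 0 ≤ h t)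
    (hL : Tendsto h (𝓝[>] 0) (𝓝 L)) :
    Tendsto (fun s : ℝ => ∫ x in Ioo (0 : ℝ) 1, h (x ^ s)) atTop (𝓝 L) := by
  have hconst : ∫ _ in Ioo (0 : ℝ) 1, L = L := by simp
  conv_rhs => rw [← hconst]
  refine tendsto_integral_filter_of_dominated_convergence (fun _ => L) ?_ ?_
    (integrableOn_const (by simp)) ?_
  · filter_upwards [eventually_gt_atTop 0] with s hs
    refine (aemeasurable_restrict_of_antitoneOn measurableSet_Ioo ?_).aestronglyMeasurable
    exact fun x hx y hy hxy => hh (rpow_mem_Ioo_zero_one hx hs) (rpow_mem_Ioo_zero_one hy hs)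
      (Real.rpow_le_rpow hx.1.le hxy hs.le)
  · filter_upwards [eventually_gt_atTop 0] with s hs
    filter_upwards [ae_restrict_mem measurableSet_Ioo] with x hx
    have hxs := rpow_mem_Ioo_zero_one hx hs
    rw [Real.norm_of_nonneg (hh0 _ hxs)]
    exact hh.le_of_tendsto_nhdsGT hL hxs
  · filter_upwards [ae_restrict_mem measurableSet_Ioo] with x hx
    refine hL.comp (tendsto_nhdsWithin_iff.2 ⟨?_, Eventually.of_forall fun s => ?_⟩)
    · exact tendsto_rpow_atTop_of_base_lt_one x (by linarith [hx.1]) hx.2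
    · exact Real.rpow_pos_of_pos hx.1 s

theorem rpow_neg_mul_mul_rpow {r a : ℝ} (hr : 0 < r) (ha : 0 ≤ a) (s : ℝ) :
    r ^ (-s) * (r * a) ^ s = a ^ s := by
  rw [Real.mul_rpow hr.le ha, ← mul_assoc, ← Real.rpow_add hr, neg_add_cancel, Real.rpow_zero,
    one_mul]

theorem integral_rpow_mul_div_Ioo_zero_one {q r : ℝ} (hq : 0 < q) (hr : 0 < r) {g : ℝ → ℝ}
    (hg0 : ∀ t ∈ Ioo (0 : ℝ) 1, 0 ≤ g t) :
    ∫ t in Ioo (0 : ℝ) 1, (t ^ (1 / r) * g t) ^ q / t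
      = r / q * ∫ x in Ioo (0 : ℝ) 1, g (x ^ (r / q)) ^ q := by
  rw [← integral_rpow_mul_Ioo_zero_one (fun t => g t ^ q) (div_pos hr hq), inv_div]
  refine setIntegral_congr_fun measurableSet_Ioo fun t ht => ?_
  rw [Real.mul_rpow (Real.rpow_nonneg ht.1.le _) (hg0 t ht), ← Real.rpow_mul ht.1.le,
    Real.rpow_sub_one ht.1.ne', one_div_mul_eq_div]
  ring

theorem lorentz_norm_limit_general (q : ℝ) (hq : 0 < q) (g : ℝ → ℝ)
    (hg : AntitoneOn g (Ioo (0:ℝ) 1)) (hg0 : ∀ t ∈ Ioo (0:ℝ) 1, 0 ≤ g t)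
    (L : ℝ) (hL : Tendsto g (nhdsWithin 0 (Ioi 0)) (nhds L)) :
    Tendsto (fun r : ℝ =>
        r ^ (-(1/q)) * (∫ t in Ioo (0:ℝ) 1, (t ^ (1/r) * g t) ^ q / t) ^ (1/q))
      atTop (nhds (q ^ (-(1/q)) * L)) := by
  let J (r : ℝ) : ℝ := ∫ x in Ioo (0 : ℝ) 1, g (x ^ (r / q)) ^ q
  have hgq : AntitoneOn (fun t => g t ^ q) (Ioo 0 1) := fun x hx y hy hxy =>
    Real.rpow_le_rpow (hg0 y hy) (hg hx hy hxy) hq.le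
  have hJ : Tendsto J atTop (𝓝 (L ^ q)) :=
    (tendsto_integral_comp_rpow_Ioo_zero_one hgq (fun t ht => Real.rpow_nonneg (hg0 t ht) q)
      ((Real.continuousAt_rpow_const L q (Or.inr hq.le)).tendsto.comp hL)).comp
      (tendsto_id.atTop_div_const hq)
  have hL0 : 0 ≤ L := ge_of_tendsto hL <| by
    filter_upwards [Ioo_mem_nhdsGT zero_lt_one] using hg0
  have hlim : (L ^ q / q) ^ (1 / q) = q ^ (-(1 / q)) * L := by
    rw [Real.div_rpow (by positivity) hq.le, ← Real.rpow_mul hL0, mul_one_div_cancel hq.ne',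
      Real.rpow_one, Real.rpow_neg hq.le, div_eq_inv_mul]
  rw [← hlim]
  refine ((Real.continuousAt_rpow_const _ _ (Or.inr (by positivity))).tendsto.comp
    (hJ.div_const q)).congr' ?_
  filter_upwards [eventually_gt_atTop 0] with r hr
  have hJ0 : 0 ≤ J r := setIntegral_nonneg measurableSet_Ioo fun x hx =>
    Real.rpow_nonneg (hg0 _ (rpow_mem_Ioo_zero_one hx (div_pos hr hq))) q
  rw [integral_rpow_mul_div_Ioo_zero_one hq hr hg0, div_mul_eq_mul_div, mul_div_assoc,
    rpow_neg_mul_mul_rpow hr (div_nonneg hJ0 hq.le)]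
  rfl

/-- Limit of normalized Lorentz norms: let `0 < q < ∞` and let `g : (0,1) → [0,∞)`
be decreasing (playing the role of a decreasing rearrangement `f^*`) with
`∫₀^1 t^{q/2} g(t)^q dt/t < ∞`.  If `g(t) → L` as `t → 0+`, then
`r^{-1/q} (∫₀^1 (t^{1/r} g(t))^q dt/t)^{1/q} → q^{-1/q} L` as `r → ∞`. -/
theorem lorentz_norm_limit (q : ℝ) (hq : 0 < q) (g : ℝ → ℝ)
    (hg : AntitoneOn g (Ioo (0:ℝ) 1)) (hg0 : ∀ t ∈ Ioo (0:ℝ) 1, 0 ≤ g t)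
    (hint : IntegrableOn (fun t => t ^ (q/2) * g t ^ q / t) (Ioo (0:ℝ) 1))
    (L : ℝ) (hL : Tendsto g (nhdsWithin 0 (Ioi 0)) (nhds L)) :
    Tendsto (fun r : ℝ =>
        r ^ (-(1/q)) * (∫ t in Ioo (0:ℝ) 1, (t ^ (1/r) * g t) ^ q / t) ^ (1/q))
      atTop (nhds (q ^ (-(1/q)) * L)) :=
  lorentz_norm_limit_general q hq g hg hg0 L hL
end

section
/- Let 1 < r < ∞, 0 < q < 1, and let g : (0,1) → [0,∞) be decreasing. Then ∫₀^1 (t^{1/r} g^{**}(t))^q dt/t ≤ C (1 - 1/r)^{-1} ∫₀^1 (t^{1/r} g(t))^q dt/t, where g^{**}(t) = (1/t)∫₀^t g(u) du and C depends only on q. -/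
/-!
Cut `(0, t]` into the dyadic pieces `(t/2^(k+1), t/2^k]`. As `g` decreases, its integral over
a piece with left end `a` is at most `a g(a)`; as `q ≤ 1`, the `q`-th power of a sum is at most
the sum of the `q`-th powers; and `(a g(a))^q` is at most twice the integral of
`u^(q-1) g(u)^q` over the next piece `(a/2, a]`. Hence `(∫₀^t g)^q ≤ 2 ∫₀^t u^(q-1) g(u)^q du`.
Integrating against `t^(q/r-q-1)` and exchanging the integrals,
`∫_u^1 t^(q/r-q-1) dt ≤ u^(q/r-q) / (q(1-1/r))` gives the constant `2/q · (1-1/r)⁻¹`.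
-/

open MeasureTheory Set
open scoped ENNReal

theorem ENNReal.rpow_tsum_le_tsum_rpow {ι : Type*} {q : ℝ} (hq0 : 0 < q) (hq1 : q ≤ 1)
    (a : ι → ℝ≥0∞) : (∑' i, a i) ^ q ≤ ∑' i, a i ^ q := by
  rw [← ENNReal.le_rpow_inv_iff hq0, ENNReal.tsum_eq_iSup_sum]
  refine iSup_le fun s => (ENNReal.le_rpow_inv_iff hq0).2 ?_
  calc (∑ i ∈ s, a i) ^ q ≤ ∑ i ∈ s, a i ^ q :=
        Finset.le_sum_of_subadditive (· ^ q) (by simp [hq0])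
          (fun x y => ENNReal.rpow_add_le_add_rpow x y hq0.le hq1) s a
    _ ≤ ∑' i, a i ^ q := ENNReal.sum_le_tsum s

theorem iUnion_Ioc_div_two_pow {t : ℝ} (ht : 0 < t) :
    ⋃ k : ℕ, Ioc (t / 2 ^ (k + 1)) (t / 2 ^ k) = Ioc 0 t := by
  refine subset_antisymm (iUnion_subset fun k => Ioc_subset_Ioc (by positivity)
    (div_le_self ht.le (one_le_pow₀ one_le_two))) fun u ⟨hu0, hut⟩ => ?_
  obtain ⟨k, hk, hk'⟩ := exists_nat_pow_near ((one_le_div hu0).2 hut) one_lt_two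
  refine mem_iUnion.2 ⟨k, ?_, ?_⟩
  · rwa [div_lt_iff₀ (by positivity), mul_comm, ← div_lt_iff₀ hu0]
  · rwa [le_div_iff₀ (by positivity), mul_comm, ← le_div_iff₀ hu0]

theorem pairwise_disjoint_Ioc_div_two_pow {t : ℝ} (ht : 0 ≤ t) :
    Pairwise (Function.onFun Disjoint fun k : ℕ => Ioc (t / 2 ^ (k + 1)) (t / 2 ^ k)) := by
  have hanti : Antitone fun k : ℕ => t / 2 ^ k := fun i j hij =>
    div_le_div_of_nonneg_left ht (by positivity) (pow_le_pow_right₀ one_le_two hij)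
  simpa only [Order.succ_eq_add_one] using hanti.pairwise_disjoint_on_Ioc_succ

theorem setLIntegral_Ioc_eq_tsum_Ioc_div_two_pow {t : ℝ} (ht : 0 < t) (f : ℝ → ℝ≥0∞) :
    ∫⁻ u in Ioc 0 t, f u = ∑' k : ℕ, ∫⁻ u in Ioc (t / 2 ^ (k + 1)) (t / 2 ^ k), f u := by
  rw [← iUnion_Ioc_div_two_pow ht,
    lintegral_iUnion (fun _ => measurableSet_Ioc) (pairwise_disjoint_Ioc_div_two_pow ht.le)]

theorem setLIntegral_Ioc_le_of_antitoneOn {a b : ℝ} {f : ℝ → ℝ≥0∞}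
    (hf : AntitoneOn f (Icc a b)) :
    ∫⁻ x in Ioc a b, f x ≤ ENNReal.ofReal (b - a) * f a :=
  calc ∫⁻ x in Ioc a b, f x ≤ ∫⁻ _ in Ioc a b, f a :=
        setLIntegral_mono' measurableSet_Ioc fun x hx =>
          hf (left_mem_Icc.2 (hx.1.le.trans hx.2)) (Ioc_subset_Icc_self hx) hx.1.le
    _ = ENNReal.ofReal (b - a) * f a := by
        rw [setLIntegral_const, Real.volume_Ioc, mul_comm]

theorem ofReal_mul_le_setLIntegral_Ioc_of_antitoneOn {a b : ℝ} {f : ℝ → ℝ≥0∞}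
    (hf : AntitoneOn f (Ioc a b)) : ENNReal.ofReal (b - a) * f b ≤ ∫⁻ x in Ioc a b, f x := by
  rcases le_or_gt b a with hba | hab
  · simp [ENNReal.ofReal_of_nonpos (sub_nonpos.2 hba)]
  calc ENNReal.ofReal (b - a) * f b = ∫⁻ _ in Ioc a b, f b := by
        rw [setLIntegral_const, Real.volume_Ioc, mul_comm]
    _ ≤ ∫⁻ x in Ioc a b, f x :=
        setLIntegral_mono' measurableSet_Ioc fun x hx => hf hx (right_mem_Ioc.2 hab) hx.2

theorem rpow_ofReal_mul_le_two_mul_setLIntegral_Ioc {q a : ℝ} (hq0 : 0 ≤ q) (hq1 : q ≤ 1)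
    (ha : 0 < a) {g : ℝ → ℝ≥0∞} (hg : AntitoneOn g (Ioc (a / 2) a)) :
    (ENNReal.ofReal a * g a) ^ q
      ≤ 2 * ∫⁻ u in Ioc (a / 2) a, ENNReal.ofReal (u ^ (q - 1)) * g u ^ q := by
  have hw : AntitoneOn (fun u => ENNReal.ofReal (u ^ (q - 1)) * g u ^ q) (Ioc (a / 2) a) :=
    fun u hu v _ huv => mul_le_mul' (ENNReal.ofReal_le_ofReal (Real.rpow_le_rpow_of_nonpos
      ((half_pos ha).trans hu.1) huv (by linarith))) (ENNReal.rpow_le_rpow (hg hu ‹_› huv) hq0)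
  have hsplit :
      ENNReal.ofReal a ^ q = 2 * ENNReal.ofReal (a - a / 2) * ENNReal.ofReal (a ^ (q - 1)) := by
    rw [ENNReal.ofReal_rpow_of_pos ha, ← ENNReal.ofReal_ofNat 2,
      ← ENNReal.ofReal_mul zero_le_two, ← ENNReal.ofReal_mul (by linarith),
      Real.rpow_sub_one ha.ne']
    congr 1
    field_simp
    ring
  calc (ENNReal.ofReal a * g a) ^ q
      = 2 * (ENNReal.ofReal (a - a / 2) * (ENNReal.ofReal (a ^ (q - 1)) * g a ^ q)) := by
        rw [ENNReal.mul_rpow_of_nonneg _ _ hq0, hsplit]; ring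
    _ ≤ 2 * ∫⁻ u in Ioc (a / 2) a, ENNReal.ofReal (u ^ (q - 1)) * g u ^ q := by
        gcongr; exact ofReal_mul_le_setLIntegral_Ioc_of_antitoneOn hw

theorem rpow_setLIntegral_Ioc_le_of_antitoneOn {q t : ℝ} (hq0 : 0 < q) (hq1 : q ≤ 1)
    (ht : 0 < t) {g : ℝ → ℝ≥0∞} (hg : AntitoneOn g (Ioc 0 t)) :
    (∫⁻ u in Ioc 0 t, g u) ^ q
      ≤ 2 * ∫⁻ u in Ioc 0 t, ENNReal.ofReal (u ^ (q - 1)) * g u ^ q := by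
  set φ : ℝ → ℝ≥0∞ := fun u => ENNReal.ofReal (u ^ (q - 1)) * g u ^ q
  set a : ℕ → ℝ := fun k => t / 2 ^ (k + 1)
  have ha0 : ∀ k, 0 < a k := fun k => by positivity
  have hat : ∀ k, t / 2 ^ k ≤ t := fun k => div_le_self ht.le (one_le_pow₀ one_le_two)
  have ha_succ : ∀ k, a k / 2 = t / 2 ^ (k + 1 + 1) := fun k => by
    simp only [a, pow_succ, div_div]
  have piece_le :
      ∀ k, ∫⁻ u in Ioc (a k) (t / 2 ^ k), g u ≤ ENNReal.ofReal (a k) * g (a k) := by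
    intro k
    have hlen : t / 2 ^ k - a k = a k := by simp only [a, pow_succ]; field_simp; ring
    exact (setLIntegral_Ioc_le_of_antitoneOn (hg.mono fun u hu =>
      ⟨(ha0 k).trans_le hu.1, hu.2.trans (hat k)⟩)).trans_eq (by rw [hlen])
  calc (∫⁻ u in Ioc 0 t, g u) ^ q = (∑' k, ∫⁻ u in Ioc (a k) (t / 2 ^ k), g u) ^ q := by
        rw [setLIntegral_Ioc_eq_tsum_Ioc_div_two_pow ht]
    _ ≤ (∑' k, ENNReal.ofReal (a k) * g (a k)) ^ q := by gcongr with k; exact piece_le k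
    _ ≤ ∑' k, (ENNReal.ofReal (a k) * g (a k)) ^ q :=
        ENNReal.rpow_tsum_le_tsum_rpow hq0 hq1 _
    _ ≤ ∑' k, 2 * ∫⁻ u in Ioc (a k / 2) (a k), φ u := ENNReal.tsum_le_tsum fun k =>
        rpow_ofReal_mul_le_two_mul_setLIntegral_Ioc hq0.le hq1 (ha0 k)
          (hg.mono fun u hu => ⟨(half_pos (ha0 k)).trans hu.1, hu.2.trans (hat (k + 1))⟩)
    _ = 2 * ∑' k, ∫⁻ u in Ioc (t / 2 ^ (k + 1 + 1)) (t / 2 ^ (k + 1)), φ u := by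
        rw [ENNReal.tsum_mul_left]; simp only [ha_succ, a]
    _ ≤ 2 * ∑' k, ∫⁻ u in Ioc (t / 2 ^ (k + 1)) (t / 2 ^ k), φ u := by
        gcongr 2 * ?_
        exact ENNReal.tsum_comp_le_tsum_of_injective (add_left_injective 1)
          fun k => ∫⁻ u in Ioc (t / 2 ^ (k + 1)) (t / 2 ^ k), φ u
    _ = 2 * ∫⁻ u in Ioc 0 t, φ u := by rw [setLIntegral_Ioc_eq_tsum_Ioc_div_two_pow ht]

theorem setLIntegral_Ioo_mul_setLIntegral_Ioc_comm {a b : ℝ} {W V : ℝ → ℝ≥0∞}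
    (hW : AEMeasurable W (volume.restrict (Ioo a b)))
    (hV : AEMeasurable V (volume.restrict (Ioo a b))) :
    ∫⁻ t in Ioo a b, W t * ∫⁻ u in Ioc a t, V u = ∫⁻ u in Ioo a b, V u * ∫⁻ t in Ico u b, W t := by
  set F : ℝ → ℝ → ℝ≥0∞ := fun t u =>
    {p : ℝ × ℝ | p.2 ≤ p.1}.indicator (fun p => W p.1 * V p.2) (t, u)
  have hF : AEMeasurable (Function.uncurry F)
      ((volume.restrict (Ioo a b)).prod (volume.restrict (Ioo a b))) :=
    (hW.comp_fst.mul hV.comp_snd).indicator (measurableSet_le measurable_snd measurable_fst)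
  have hleft : ∀ t ∈ Ioo a b, W t * ∫⁻ u in Ioc a t, V u = ∫⁻ u in Ioo a b, F t u := by
    intro t ht
    have hF_t : F t = (Iic t).indicator fun u => W t * V u := by
      ext u; simp [F, indicator_apply]
    have hset : Iic t ∩ Ioo a b = Ioc a t := by
      ext u; simp only [mem_inter_iff, mem_Iic, mem_Ioo, mem_Ioc]; grind
    rw [hF_t, lintegral_indicator measurableSet_Iic, Measure.restrict_restrict measurableSet_Iic,
      hset, lintegral_const_mul'' _ (hV.mono_set (Ioc_subset_Ioo_right ht.2))]
  have hright : ∀ u ∈ Ioo a b, V u * ∫⁻ t in Ico u b, W t = ∫⁻ t in Ioo a b, F t u := by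
    intro u hu
    have hF_u : (F · u) = (Ici u).indicator fun t => V u * W t := by
      ext t; simp [F, indicator_apply, mul_comm]
    have hset : Ici u ∩ Ioo a b = Ico u b := by
      ext t; simp only [mem_inter_iff, mem_Ici, mem_Ioo, mem_Ico]; grind
    rw [hF_u, lintegral_indicator measurableSet_Ici, Measure.restrict_restrict measurableSet_Ici,
      hset, lintegral_const_mul'' _ (hW.mono_set (Ico_subset_Ioo_left hu.1))]
  calc ∫⁻ t in Ioo a b, W t * ∫⁻ u in Ioc a t, V u
      = ∫⁻ t in Ioo a b, ∫⁻ u in Ioo a b, F t u :=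
        setLIntegral_congr_fun measurableSet_Ioo hleft
    _ = ∫⁻ u in Ioo a b, ∫⁻ t in Ioo a b, F t u := lintegral_lintegral_swap hF
    _ = ∫⁻ u in Ioo a b, V u * ∫⁻ t in Ico u b, W t :=
        (setLIntegral_congr_fun measurableSet_Ioo hright).symm

theorem setLIntegral_Ico_rpow_le {u b α : ℝ} (hu : 0 < u) (hα : α < 0) :
    ∫⁻ t in Ico u b, ENNReal.ofReal (t ^ (α - 1)) ≤ ENNReal.ofReal (u ^ α / -α) :=
  calc ∫⁻ t in Ico u b, ENNReal.ofReal (t ^ (α - 1))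
      ≤ ∫⁻ t in Ici u, ENNReal.ofReal (t ^ (α - 1)) := lintegral_mono_set Ico_subset_Ici_self
    _ = ∫⁻ t in Ioi u, ENNReal.ofReal (t ^ (α - 1)) := setLIntegral_congr Ioi_ae_eq_Ici.symm
    _ = ENNReal.ofReal (∫ t in Ioi u, t ^ (α - 1)) :=
        (ofReal_integral_eq_lintegral_ofReal (integrableOn_Ioi_rpow_of_lt (by linarith) hu)
          (ae_restrict_of_forall_mem measurableSet_Ioi fun t ht =>
            Real.rpow_nonneg (hu.trans ht).le _)).symm
    _ = ENNReal.ofReal (u ^ α / -α) := by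
        rw [integral_Ioi_rpow_of_lt (by linarith) hu, sub_add_cancel, neg_div, div_neg]

theorem lintegral_rpow_setLIntegral_Ioc_le_of_antitoneOn {q β b : ℝ} (hq0 : 0 < q)
    (hq1 : q ≤ 1) (hβ : β < q) {g : ℝ → ℝ≥0∞} (hg : AntitoneOn g (Ioo 0 b)) :
    ∫⁻ t in Ioo 0 b, ENNReal.ofReal (t ^ (β - q - 1)) * (∫⁻ u in Ioc 0 t, g u) ^ q
      ≤ ENNReal.ofReal (2 / (q - β)) *
        ∫⁻ t in Ioo 0 b, ENNReal.ofReal (t ^ (β - 1)) * g t ^ q := by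
  set W : ℝ → ℝ≥0∞ := fun t => ENNReal.ofReal (t ^ (β - q - 1))
  set V : ℝ → ℝ≥0∞ := fun u => ENNReal.ofReal (u ^ (q - 1)) * g u ^ q
  have hW : AEMeasurable W (volume.restrict (Ioo 0 b)) := by fun_prop
  have hV : AEMeasurable V (volume.restrict (Ioo 0 b)) :=
    (by fun_prop : Measurable fun u : ℝ => ENNReal.ofReal (u ^ (q - 1))).aemeasurable.mul
      ((aemeasurable_restrict_of_antitoneOn measurableSet_Ioo hg).pow_const q)
  have hweight : ∀ u ∈ Ioo 0 b, V u * ENNReal.ofReal (u ^ (β - q) / (q - β))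
      = ENNReal.ofReal (1 / (q - β)) * (ENNReal.ofReal (u ^ (β - 1)) * g u ^ q) := by
    intro u hu
    have hexp : u ^ (q - 1) * (u ^ (β - q) / (q - β)) = 1 / (q - β) * u ^ (β - 1) := by
      rw [mul_div_assoc', ← Real.rpow_add hu.1]; ring_nf
    simp only [V]
    rw [mul_right_comm, ← ENNReal.ofReal_mul (Real.rpow_nonneg hu.1.le _), hexp,
      ENNReal.ofReal_mul (one_div_pos.2 (sub_pos.2 hβ)).le, mul_assoc]
  calc ∫⁻ t in Ioo 0 b, W t * (∫⁻ u in Ioc 0 t, g u) ^ q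
      ≤ ∫⁻ t in Ioo 0 b, 2 * (W t * ∫⁻ u in Ioc 0 t, V u) :=
        setLIntegral_mono' measurableSet_Ioo fun t ht => by
          rw [mul_left_comm]
          gcongr
          exact rpow_setLIntegral_Ioc_le_of_antitoneOn hq0 hq1 ht.1
            (hg.mono fun u hu => ⟨hu.1, hu.2.trans_lt ht.2⟩)
    _ = 2 * ∫⁻ u in Ioo 0 b, V u * ∫⁻ t in Ico u b, W t := by
        rw [lintegral_const_mul' 2 _ (by norm_num),
          setLIntegral_Ioo_mul_setLIntegral_Ioc_comm hW hV]
    _ ≤ 2 * ∫⁻ u in Ioo 0 b, V u * ENNReal.ofReal (u ^ (β - q) / (q - β)) := by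
        gcongr 2 * ?_
        refine setLIntegral_mono' measurableSet_Ioo fun u hu => ?_
        gcongr
        simpa [W, sub_sub, add_comm] using
          setLIntegral_Ico_rpow_le (b := b) hu.1 (sub_neg.2 hβ)
    _ = ENNReal.ofReal (2 / (q - β)) *
          ∫⁻ t in Ioo 0 b, ENNReal.ofReal (t ^ (β - 1)) * g t ^ q := by
        rw [setLIntegral_congr_fun measurableSet_Ioo hweight,
          lintegral_const_mul' _ _ ENNReal.ofReal_ne_top, ← mul_assoc, ← ENNReal.ofReal_ofNat 2,
          ← ENNReal.ofReal_mul zero_le_two, mul_one_div]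

theorem ofReal_integral_le_lintegral_ofReal {α : Type*} [MeasurableSpace α] {μ : Measure α}
    {f : α → ℝ} (hf : 0 ≤ᵐ[μ] f) : ENNReal.ofReal (∫ x, f x ∂μ) ≤ ∫⁻ x, ENNReal.ofReal (f x) ∂μ :=
  calc ENNReal.ofReal (∫ x, f x ∂μ) ≤ ‖∫ x, f x ∂μ‖ₑ := Real.ofReal_le_enorm _
    _ ≤ ∫⁻ x, ‖f x‖ₑ ∂μ := enorm_integral_le_lintegral_enorm f
    _ = ∫⁻ x, ENNReal.ofReal (f x) ∂μ :=
        lintegral_congr_ae (hf.mono fun _ hx => Real.enorm_of_nonneg hx)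

theorem integral_le_mul_integral_of_lintegral_le {α : Type*} [MeasurableSpace α] {μ : Measure α}
    {f h : α → ℝ} {C : ℝ} (hC : 0 ≤ C) (hh0 : 0 ≤ᵐ[μ] h) (hhm : AEStronglyMeasurable h μ)
    (hhf : h ≤ᵐ[μ] f)
    (hle : ∫⁻ x, ENNReal.ofReal (f x) ∂μ ≤ ENNReal.ofReal C * ∫⁻ x, ENNReal.ofReal (h x) ∂μ) :
    ∫ x, f x ∂μ ≤ C * ∫ x, h x ∂μ := by
  by_cases hfi : Integrable f μ
  · have hhi : Integrable h μ := hfi.mono' hhm ((hh0.and hhf).mono fun x hx => by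
      rw [Real.norm_of_nonneg hx.1]; exact hx.2)
    rw [integral_eq_lintegral_of_nonneg_ae (hh0.trans hhf) hfi.1,
      integral_eq_lintegral_of_nonneg_ae hh0 hhm, ← ENNReal.toReal_ofReal hC,
      ← ENNReal.toReal_mul]
    exact ENNReal.toReal_mono
      (ENNReal.mul_ne_top ENNReal.ofReal_ne_top hhi.lintegral_lt_top.ne) hle
  · rw [integral_undef hfi]
    exact mul_nonneg hC (integral_nonneg_of_ae hh0)

theorem mul_le_setIntegral_Ioc_of_antitoneOn {a b : ℝ} {f : ℝ → ℝ} (hab : a ≤ b)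
    (hf : AntitoneOn f (Ioc a b)) (hfi : IntegrableOn f (Ioc a b)) :
    (b - a) * f b ≤ ∫ x in Ioc a b, f x :=
  calc (b - a) * f b = ∫ _ in Ioc a b, f b := by
        rw [setIntegral_const, Real.volume_real_Ioc_of_le hab, smul_eq_mul]
    _ ≤ ∫ x in Ioc a b, f x := setIntegral_mono_on
        (integrableOn_const (by simp [Real.volume_Ioc])) hfi measurableSet_Ioc
        fun x hx => hf hx ⟨hx.1.trans_le hx.2, le_rfl⟩ hx.2

theorem AntitoneOn.integrableOn_Ioo_of_integrableOn_Ioc {a b t : ℝ} {g : ℝ → ℝ}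
    (hg : AntitoneOn g (Ioo a b)) (hg0 : ∀ x ∈ Ioo a b, 0 ≤ g x) (ht : t ∈ Ioo a b)
    (hint : IntegrableOn g (Ioc a t)) : IntegrableOn g (Ioo a b) := by
  have hsub : Ico t b ⊆ Ioo a b := Ico_subset_Ioo_left ht.1
  have hbdd : IntegrableOn g (Ico t b) :=
    ⟨(aemeasurable_restrict_of_antitoneOn measurableSet_Ico (hg.mono hsub)).aestronglyMeasurable,
      HasFiniteIntegral.restrict_of_bounded (g t) measure_Ico_lt_top
        (ae_restrict_of_forall_mem measurableSet_Ico fun x hx => by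
          rw [Real.norm_of_nonneg (hg0 x (hsub hx))]; exact hg ht (hsub hx) hx.1)⟩
  exact (hint.union hbdd).mono_set fun x hx => (le_or_gt x t).imp (fun h => ⟨hx.1, h⟩)
    fun h => ⟨h.le, hx.2⟩

theorem rpow_mul_rpow_div_self {t x : ℝ} (ht : 0 < t) (hx : 0 ≤ x) (p q : ℝ) :
    (t ^ p * x) ^ q / t = t ^ (p * q - 1) * x ^ q := by
  rw [Real.mul_rpow (Real.rpow_nonneg ht.le _) hx, ← Real.rpow_mul ht.le,
    Real.rpow_sub_one ht.ne']
  ring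

theorem rpow_mul_one_div_mul_rpow_div_self {t x : ℝ} (ht : 0 < t) (hx : 0 ≤ x) (p q : ℝ) :
    (t ^ p * ((1 / t) * x)) ^ q / t = t ^ (p * q - q - 1) * x ^ q := by
  rw [rpow_mul_rpow_div_self ht (by positivity), Real.mul_rpow (by positivity) hx, one_div,
    Real.inv_rpow ht.le, ← Real.rpow_neg ht.le, ← mul_assoc, ← Real.rpow_add ht]
  ring_nf

theorem lintegral_ofReal_hardy_maximal_le {q r : ℝ} (hq0 : 0 < q) (hq1 : q ≤ 1) (hr : 1 < r)
    {g : ℝ → ℝ} (hg : AntitoneOn g (Ioo 0 1)) (hg0 : ∀ t ∈ Ioo (0 : ℝ) 1, 0 ≤ g t) :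
    ∫⁻ t in Ioo (0 : ℝ) 1,
        ENNReal.ofReal ((t ^ (1 / r) * ((1 / t) * ∫ u in Ioc 0 t, g u)) ^ q / t)
      ≤ ENNReal.ofReal (2 / q * (1 - 1 / r)⁻¹) *
        ∫⁻ t in Ioo (0 : ℝ) 1, ENNReal.ofReal ((t ^ (1 / r) * g t) ^ q / t) := by
  have hβ : 1 / r * q < q := mul_lt_of_lt_one_left hq0 ((div_lt_one (by linarith)).2 hr)
  have hC : 2 / q * (1 - 1 / r)⁻¹ = 2 / (q - 1 / r * q) := by
    rw [← one_sub_mul, div_mul_eq_div_div]; ring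
  have hG : ∀ t ∈ Ioo (0 : ℝ) 1,
      ENNReal.ofReal ((t ^ (1 / r) * ((1 / t) * ∫ u in Ioc 0 t, g u)) ^ q / t)
        ≤ ENNReal.ofReal (t ^ (1 / r * q - q - 1)) *
          (∫⁻ u in Ioc 0 t, ENNReal.ofReal (g u)) ^ q := by
    intro t ht
    have hg0' : 0 ≤ᵐ[volume.restrict (Ioc 0 t)] g :=
      ae_restrict_of_forall_mem measurableSet_Ioc fun u hu => hg0 u ⟨hu.1, hu.2.trans_lt ht.2⟩
    rw [rpow_mul_one_div_mul_rpow_div_self ht.1 (integral_nonneg_of_ae hg0'),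
      ENNReal.ofReal_mul (Real.rpow_nonneg ht.1.le _),
      ← ENNReal.ofReal_rpow_of_nonneg (integral_nonneg_of_ae hg0') hq0.le]
    gcongr
    exact ofReal_integral_le_lintegral_ofReal hg0'
  have hg_eq : ∀ t ∈ Ioo (0 : ℝ) 1,
      ENNReal.ofReal (t ^ (1 / r * q - 1)) * ENNReal.ofReal (g t) ^ q
        = ENNReal.ofReal ((t ^ (1 / r) * g t) ^ q / t) := fun t ht => by
    rw [rpow_mul_rpow_div_self ht.1 (hg0 t ht),
      ENNReal.ofReal_mul (Real.rpow_nonneg ht.1.le _),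
      ENNReal.ofReal_rpow_of_nonneg (hg0 t ht) hq0.le]
  calc _ ≤ ∫⁻ t in Ioo (0 : ℝ) 1,
        ENNReal.ofReal (t ^ (1 / r * q - q - 1)) * (∫⁻ u in Ioc 0 t, ENNReal.ofReal (g u)) ^ q :=
        setLIntegral_mono' measurableSet_Ioo hG
    _ ≤ ENNReal.ofReal (2 / (q - 1 / r * q)) * ∫⁻ t in Ioo (0 : ℝ) 1,
        ENNReal.ofReal (t ^ (1 / r * q - 1)) * ENNReal.ofReal (g t) ^ q :=
        lintegral_rpow_setLIntegral_Ioc_le_of_antitoneOn hq0 hq1 hβ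
          (ENNReal.ofReal_mono.comp_antitoneOn hg)
    _ = _ := by rw [hC, setLIntegral_congr_fun measurableSet_Ioo hg_eq]

/-- Hardy-type inequality for the maximal function of a decreasing function in the
quasi-Banach range `0 < q < 1`: there is `C > 0` depending only on `q` such that for
every `1 < r < ∞` and every non-negative decreasing `g` on `(0,1)`,
`∫₀^1 (t^{1/r} g^{**}(t))^q dt/t ≤ C (1-1/r)^{-1} ∫₀^1 (t^{1/r} g(t))^q dt/t`,
where `g^{**}(t) = (1/t)∫₀^t g(u) du`. -/
theorem hardy_maximal_quasiBanach (q : ℝ) (hq0 : 0 < q) (hq1 : q < 1) :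
    ∃ C : ℝ, 0 < C ∧ ∀ r : ℝ, 1 < r → ∀ g : ℝ → ℝ,
      AntitoneOn g (Ioo (0:ℝ) 1) → (∀ t ∈ Ioo (0:ℝ) 1, 0 ≤ g t) →
      (∫ t in Ioo (0:ℝ) 1, (t ^ (1/r) * ((1/t) * ∫ u in Ioc (0:ℝ) t, g u)) ^ q / t)
        ≤ C * (1 - 1/r)⁻¹ * ∫ t in Ioo (0:ℝ) 1, (t ^ (1/r) * g t) ^ q / t := by
  refine ⟨2 / q, by positivity, fun r hr g hg hg0 => ?_⟩
  have hC : 0 ≤ 2 / q * (1 - 1 / r)⁻¹ :=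
    mul_nonneg (by positivity) (inv_nonneg.2 (sub_nonneg.2 ((div_le_one (by linarith)).2 hr.le)))
  have hh0 : ∀ t ∈ Ioo (0 : ℝ) 1, 0 ≤ (t ^ (1 / r) * g t) ^ q / t := fun t ht =>
    div_nonneg (Real.rpow_nonneg (mul_nonneg (Real.rpow_nonneg ht.1.le _) (hg0 t ht)) _) ht.1.le
  by_cases hgi : IntegrableOn g (Ioo 0 1)
  · have hgm := aemeasurable_restrict_of_antitoneOn (μ := volume) measurableSet_Ioo hg
    refine integral_le_mul_integral_of_lintegral_le hC
      (ae_restrict_of_forall_mem measurableSet_Ioo hh0)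
      (by apply AEMeasurable.aestronglyMeasurable; fun_prop)
      (ae_restrict_of_forall_mem measurableSet_Ioo fun t ht => ?_)
      (lintegral_ofReal_hardy_maximal_le hq0 hq1.le hr hg hg0)
    have hmean : g t ≤ (1 / t) * ∫ u in Ioc 0 t, g u := by
      rw [one_div, le_inv_mul_iff₀ ht.1]
      simpa using mul_le_setIntegral_Ioc_of_antitoneOn ht.1.le
        (hg.mono fun u hu => ⟨hu.1, hu.2.trans_lt ht.2⟩)
        (hgi.mono_set fun u hu => ⟨hu.1, hu.2.trans_lt ht.2⟩)
    have ht0 : 0 ≤ t := ht.1.le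
    dsimp only
    gcongr
    exact mul_nonneg (by positivity) (hg0 t ht)
  · -- `g` is not integrable near `0`, so each `∫ u in Ioc 0 t, g u` takes the junk value `0`
    have hzero : ∀ t ∈ Ioo (0 : ℝ) 1,
        (t ^ (1 / r) * ((1 / t) * ∫ u in Ioc 0 t, g u)) ^ q / t = 0 := fun t ht => by
      rw [integral_undef fun h => hgi (hg.integrableOn_Ioo_of_integrableOn_Ioc hg0 ht h)]
      simp [Real.zero_rpow hq0.ne']
    rw [setIntegral_eq_zero_of_forall_eq_zero hzero]
    exact mul_nonneg hC (setIntegral_nonneg measurableSet_Ioo hh0)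
end
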